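/- arXiv:1808.05366 — 2 statements merged into one kernel-verified Lean document; each statement's English description precedes it below -/
import Mathlib

section
/- Let M1, Y, Z, M2 be finite nonempty sets, let P be a pmf on M1×Y×Z, and let f2 : M1×Y → M2. Let P_{(Z,M2)} be the joint law of (Z, f2(M1,Y)) when (M1,Y,Z) ~ P, let P_Z, P_{M1}, P_Y be the corresponding marginals of P, and let P̄_{M2} be the pushforward of the product P_{M1}⊗P_Y under f2. Then D(P_{(Z,M2)} ‖ P_Z⊗P̄_{M2}) ≤ I_P(M2;Z) + I_P(M1;Y), where I_P(M2;Z) is the mutual information between f2(M1,Y) and Z under P and I_P(M1;Y) is the mutual information between M1 and Y under P. -/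
open scoped BigOperators Classical

noncomputable section

/-- Kullback–Leibler divergence between two pmfs on a finite set (natural log,
with the convention `0·log(0/q) = 0` encoded by the term vanishing). -/
def KL {Ω : Type} [Fintype Ω] (P Q : Ω → ℝ) : ℝ :=
  ∑ ω, P ω * Real.log (P ω / Q ω)

/-- `P` is a probability mass function on the finite set `Ω`. -/
def IsPMF {Ω : Type} [Fintype Ω] (P : Ω → ℝ) : Prop :=
  (∀ ω, 0 ≤ P ω) ∧ ∑ ω, P ω = 1

/-- Pushforward (law of `φ`) of the pmf `P` under the map `φ`. -/
def pushf {Ω A : Type} [Fintype Ω] (P : Ω → ℝ) (φ : Ω → A) : A → ℝ :=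
  fun a => ∑ ω, if φ ω = a then P ω else 0

/-- Mutual information `I(φA; φB)` under the pmf `P`. -/
def MIof {Ω A B : Type} [Fintype Ω] [Fintype A] [Fintype B]
    (P : Ω → ℝ) (φA : Ω → A) (φB : Ω → B) : ℝ :=
  KL (pushf P fun ω => (φA ω, φB ω)) (fun p => pushf P φA p.1 * pushf P φB p.2)

/-- Shannon entropy of a pmf on a finite set (natural log). -/
def entropy {Ω : Type} [Fintype Ω] (P : Ω → ℝ) : ℝ :=
  -∑ ω, P ω * Real.log (P ω)

end

/-!
The reference law `P_Z ⊗ P̄_{M2}` differs from `P_Z ⊗ P_{M2}` only in its second factor, so the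
divergence splits exactly as `I(M2;Z) + D(P_{M2} ‖ P̄_{M2})`. Both `P_{M2}` and `P̄_{M2}` are
pushforwards under `f2`, of `P_{M1Y}` and of `P_{M1} ⊗ P_Y` respectively, so by the data
processing inequality (the log-sum inequality on each fibre of `f2`) the second term is at most
`D(P_{M1Y} ‖ P_{M1} ⊗ P_Y) = I(M1;Y)`.
-/

open Real Finset

lemma sub_le_mul_log_div {p r : ℝ} (hp : 0 ≤ p) (hr : 0 ≤ r) (hpr : 0 < p → 0 < r) :
    p - r ≤ p * log (p / r) := by
  rcases hp.eq_or_lt with rfl | hp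
  · simpa using hr
  have hr := hpr hp
  have := one_sub_inv_le_log_of_pos (div_pos hp hr)
  rw [inv_div] at this
  calc p - r = p * (1 - r / p) := by field_simp
    _ ≤ p * log (p / r) := by gcongr

/-- The log-sum inequality. -/
theorem sum_mul_log_div_sum_le {ι : Type*} (s : Finset ι) {p q : ι → ℝ}
    (hp : ∀ i ∈ s, 0 ≤ p i) (hq : ∀ i ∈ s, 0 ≤ q i) (hpq : ∀ i ∈ s, 0 < p i → 0 < q i) :
    (∑ i ∈ s, p i) * log ((∑ i ∈ s, p i) / ∑ i ∈ s, q i) ≤ ∑ i ∈ s, p i * log (p i / q i) := by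
  set A := ∑ i ∈ s, p i
  set B := ∑ i ∈ s, q i
  have hA₀ : 0 ≤ A := sum_nonneg hp
  rcases hA₀.eq_or_lt with hA | hA
  · rw [← hA, zero_mul]
    exact sum_nonneg fun i hi => by
      rw [(sum_eq_zero_iff_of_nonneg hp).1 hA.symm i hi, zero_mul]
  obtain ⟨i₀, hi₀, hpi₀⟩ : ∃ i ∈ s, 0 < p i := exists_lt_of_sum_lt (by simpa using hA)
  have hB : 0 < B := sum_pos' hq ⟨i₀, hi₀, hpq i₀ hi₀ hpi₀⟩
  -- compare each `p i` with `q i` rescaled to total mass `A`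
  have key : ∀ i ∈ s, p i - q i * (A / B) ≤ p i * log (p i / q i) - p i * log (A / B) := by
    intro i hi
    rcases (hp i hi).eq_or_lt with h | h
    · simpa [← h] using mul_nonneg (hq i hi) (div_pos hA hB).le
    have hqi := hpq i hi h
    have := sub_le_mul_log_div (hp i hi) (r := q i * (A / B)) (by positivity) fun _ => by positivity
    rwa [div_mul_eq_div_div, log_div (by positivity) (div_pos hA hB).ne', mul_sub] at this
  have := sum_le_sum key
  rw [sum_sub_distrib, sum_sub_distrib, ← sum_mul, ← sum_mul, mul_div_cancel₀ _ hB.ne'] at this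
  linarith

section Pushforward

variable {Ω A B : Type} [Fintype Ω] {P : Ω → ℝ}

lemma pushf_nonneg (hP : ∀ ω, 0 ≤ P ω) (φ : Ω → A) (a : A) : 0 ≤ pushf P φ a :=
  sum_nonneg fun ω _ => ite_nonneg (hP ω) le_rfl

lemma pushf_pos (hP : ∀ ω, 0 ≤ P ω) (φ : Ω → A) {ω : Ω} (h : 0 < P ω) :
    0 < pushf P φ (φ ω) :=
  sum_pos' (fun ω' _ => ite_nonneg (hP ω') le_rfl) ⟨ω, mem_univ _, by rwa [if_pos rfl]⟩

lemma exists_of_pushf_pos {φ : Ω → A} {a : A} (h : 0 < pushf P φ a) :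
    ∃ ω, φ ω = a ∧ 0 < P ω := by
  by_contra! hc
  exact h.not_ge (sum_nonpos fun ω _ => by split_ifs with hω; exacts [hc ω hω, le_rfl])

lemma pushf_pos_of_pushf_pos {Q : Ω → ℝ} (hQ : ∀ ω, 0 ≤ Q ω) (hPQ : ∀ ω, 0 < P ω → 0 < Q ω)
    {φ : Ω → A} {a : A} (h : 0 < pushf P φ a) : 0 < pushf Q φ a := by
  obtain ⟨ω, rfl, hω⟩ := exists_of_pushf_pos h
  exact pushf_pos hQ φ (hPQ ω hω)

lemma mul_pushf_pos_of_pushf_prod_pos (hP : ∀ ω, 0 ≤ P ω) {X : Ω → A} {Y : Ω → B} {a : A} {b : B}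
    (h : 0 < pushf P (fun ω => (X ω, Y ω)) (a, b)) : 0 < pushf P X a * pushf P Y b := by
  obtain ⟨ω, hω, hPω⟩ := exists_of_pushf_pos h
  obtain ⟨rfl, rfl⟩ := Prod.mk.inj hω
  exact mul_pos (pushf_pos hP X hPω) (pushf_pos hP Y hPω)

lemma pushf_pushf [Fintype A] (φ : Ω → A) (g : A → B) :
    pushf (pushf P φ) g = pushf P (fun ω => g (φ ω)) := by
  funext b
  simp only [pushf, ite_sum_zero]
  rw [sum_comm]
  refine sum_congr rfl fun ω _ => ?_
  rw [sum_eq_single (φ ω) (fun a _ ha => by simp [Ne.symm ha]) (by simp)]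
  simp

lemma sum_pushf_prod_left [Fintype A] (X : Ω → A) (Y : Ω → B) (b : B) :
    ∑ a, pushf P (fun ω => (X ω, Y ω)) (a, b) = pushf P Y b := by
  simp only [pushf]
  rw [sum_comm]
  simp [Prod.ext_iff, ite_and]

lemma pushf_prod_swap (X : Ω → A) (Y : Ω → B) (a : A) (b : B) :
    pushf P (fun ω => (Y ω, X ω)) (b, a) = pushf P (fun ω => (X ω, Y ω)) (a, b) := by
  simp only [pushf, Prod.mk.injEq, and_comm]

end Pushforward

section KL

variable {Ω A B : Type} [Fintype Ω]

/-- Data processing inequality for the Kullback–Leibler divergence. -/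
theorem KL_pushf_le [Fintype B] {p q : Ω → ℝ} (hp : ∀ ω, 0 ≤ p ω) (hq : ∀ ω, 0 ≤ q ω)
    (hpq : ∀ ω, 0 < p ω → 0 < q ω) (g : Ω → B) :
    KL (pushf p g) (pushf q g) ≤ KL p q := by
  unfold KL
  rw [← sum_fiberwise univ g]
  refine sum_le_sum fun b _ => ?_
  have hfiber : ∀ r : Ω → ℝ, pushf r g b = ∑ ω with g ω = b, r ω := fun r => (sum_filter _ _).symm
  rw [hfiber, hfiber]
  exact sum_mul_log_div_sum_le _ (fun ω _ => hp ω) (fun ω _ => hq ω) fun ω _ => hpq ω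

theorem MIof_comm [Fintype A] [Fintype B] (P : Ω → ℝ) (X : Ω → A) (Y : Ω → B) :
    MIof P X Y = MIof P Y X := by
  unfold MIof KL
  refine Fintype.sum_equiv (Equiv.prodComm A B) _ _ fun p => ?_
  simp only [Equiv.prodComm_apply, Prod.fst_swap, Prod.snd_swap, mul_comm (pushf P X p.1)]
  rw [← pushf_prod_swap X Y]
  rfl

theorem KL_pushf_prod_eq_MIof_add [Fintype A] [Fintype B] {P : Ω → ℝ} (hP : ∀ ω, 0 ≤ P ω)
    (X : Ω → A) (Y : Ω → B) {ν : B → ℝ} (hν : ∀ b, 0 < pushf P Y b → 0 < ν b) :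
    KL (pushf P fun ω => (X ω, Y ω)) (fun p => pushf P X p.1 * ν p.2)
      = MIof P X Y + KL (pushf P Y) ν := by
  set R := pushf P fun ω => (X ω, Y ω)
  have hsplit : ∀ p : A × B, R p * log (R p / (pushf P X p.1 * ν p.2)) =
      R p * log (R p / (pushf P X p.1 * pushf P Y p.2)) + R p * log (pushf P Y p.2 / ν p.2) := by
    rintro ⟨a, b⟩
    have hR : 0 ≤ R (a, b) := pushf_nonneg hP _ _
    rcases hR.eq_or_lt with h | h
    · simp [← h]
    have hXY := mul_pushf_pos_of_pushf_prod_pos hP h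
    have hX := pos_of_mul_pos_left hXY (pushf_nonneg hP Y b)
    have hY := pos_of_mul_pos_right hXY (pushf_nonneg hP X a)
    have hνb := hν b hY
    rw [log_div h.ne' (by positivity), log_div h.ne' (by positivity), log_div hY.ne' hνb.ne',
      log_mul hX.ne' hνb.ne', log_mul hX.ne' hY.ne']
    ring
  unfold MIof KL
  rw [sum_congr rfl fun p _ => hsplit p, sum_add_distrib]
  congr 1
  rw [Fintype.sum_prod_type_right]
  simp only [← sum_mul, R, sum_pushf_prod_left]

end KL

theorem kl_vs_mismatched_message_law_general
    (M1 Y Z M2 : Type) [Fintype M1] [Fintype Y] [Fintype Z] [Fintype M2]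
    (P : M1 × Y × Z → ℝ) (hP : IsPMF P)
    (f2 : M1 × Y → M2) :
    KL (pushf P (fun ω => (ω.2.2, f2 (ω.1, ω.2.1))))
        (fun p => pushf P (fun ω => ω.2.2) p.1 *
          (∑ m1 : M1, ∑ y : Y,
            if f2 (m1, y) = p.2 then
              pushf P (fun ω => ω.1) m1 * pushf P (fun ω => ω.2.1) y
            else 0))
      ≤ MIof P (fun ω => f2 (ω.1, ω.2.1)) (fun ω => ω.2.2)
        + MIof P (fun ω => ω.1) (fun ω => ω.2.1) := by
  have hP0 := hP.1
  set PMY := pushf P fun ω => (ω.1, ω.2.1)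
  set Q : M1 × Y → ℝ := fun x => pushf P (fun ω => ω.1) x.1 * pushf P (fun ω => ω.2.1) x.2
  have hQ0 : ∀ x, 0 ≤ Q x := fun x => mul_nonneg (pushf_nonneg hP0 _ _) (pushf_nonneg hP0 _ _)
  have hPMY_Q : ∀ x, 0 < PMY x → 0 < Q x := fun _ => mul_pushf_pos_of_pushf_prod_pos hP0
  have hmismatch : ∀ m, (∑ m1 : M1, ∑ y : Y, if f2 (m1, y) = m then
      pushf P (fun ω => ω.1) m1 * pushf P (fun ω => ω.2.1) y else 0) = pushf Q f2 m :=
    fun m => (Fintype.sum_prod_type fun x => if f2 x = m then Q x else 0).symm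
  have hmessage : pushf P (fun ω => f2 (ω.1, ω.2.1)) = pushf PMY f2 := (pushf_pushf _ _).symm
  simp only [hmismatch]
  rw [KL_pushf_prod_eq_MIof_add hP0 _ _, MIof_comm, hmessage]
  · exact add_le_add_right (KL_pushf_le (pushf_nonneg hP0 _) hQ0 hPMY_Q f2) _
  · rw [hmessage]
    exact fun m => pushf_pos_of_pushf_pos hQ0 hPMY_Q

/-- **KL divergence against the product of a marginal and a mismatched message
law.** With `M2 = f2(M1,Y)` and `P̄_{M2}` the pushforward of `P_{M1} ⊗ P_Y`
under `f2`, one has `D(P_{(Z,M2)} ‖ P_Z ⊗ P̄_{M2}) ≤ I_P(M2;Z) + I_P(M1;Y)`. -/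
theorem kl_vs_mismatched_message_law
    (M1 Y Z M2 : Type) [Fintype M1] [Fintype Y] [Fintype Z] [Fintype M2]
    [Nonempty M1] [Nonempty Y] [Nonempty Z] [Nonempty M2]
    (P : M1 × Y × Z → ℝ) (hP : IsPMF P)
    (f2 : M1 × Y → M2) :
    KL (pushf P (fun ω => (ω.2.2, f2 (ω.1, ω.2.1))))
        (fun p => pushf P (fun ω => ω.2.2) p.1 *
          (∑ m1 : M1, ∑ y : Y,
            if f2 (m1, y) = p.2 then
              pushf P (fun ω => ω.1) m1 * pushf P (fun ω => ω.2.1) y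
            else 0))
      ≤ MIof P (fun ω => f2 (ω.1, ω.2.1)) (fun ω => ω.2.2)
        + MIof P (fun ω => ω.1) (fun ω => ω.2.1) :=
  kl_vs_mismatched_message_law_general M1 Y Z M2 P hP f2
end

section
/- Let V and Y be finite nonempty sets, let Q be a pmf on V×Y with marginals Q_V, Q_Y, let P_Y be a pmf on Y with P_Y(y) > 0 for all y, let μ := (min_y P_Y(y))^{-1}, and let θ > 0 satisfy |Q_Y(y) − P_Y(y)| ≤ θ·P_Y(y) for all y. Let Ṽ := V ∪ {v*} with v* a new symbol and define the pmf P' on Ṽ×Y by P'(v,y) := Q(v,y)/(1+θ) for v ∈ V and P'(v*,y) := ((1+θ)·P_Y(y) − Q_Y(y))/(1+θ) (these values are nonnegative and sum to 1). Then: (i) the Y-marginal of P' equals P_Y; and (ii) I_{P'}(Ṽ;Y) ≤ (1/(1+θ))·( I_Q(V;Y) + D(Q_Y‖P_Y) ) + (θ/(1+θ))·log μ. -/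
/-!
On the old symbols `P'` is `Q` scaled by `1/(1+θ)`, so the conditional law of `Y` given `V`
is unchanged; since the `Y`-marginal of `P'` is `P_Y` rather than `Q_Y`, these rows contribute
`(I_Q(V;Y) + D(Q_Y‖P_Y))/(1+θ)` (chain rule). The new symbol `v*` has mass `θ/(1+θ)`, and its row
contributes at most that times `log μ`, because `P'(v*,y) ≤ P'_V(v*)` and `P_Y(y) ≥ 1/μ`.
-/

open scoped BigOperators Classical

open Real

section JointLaws

variable {α β : Type} [Fintype α] [Fintype β]

lemma sum_pushf {Ω A : Type} [Fintype Ω] [Fintype A] (P : Ω → ℝ) (φ : Ω → A) :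
    ∑ a, pushf P φ a = ∑ ω, P ω := by
  simp only [pushf]
  rw [Finset.sum_comm]
  simp

lemma pushf_fst_apply (P : α × β → ℝ) (a : α) : pushf P Prod.fst a = ∑ b, P (a, b) := by
  simp only [pushf, Fintype.sum_prod_type]
  rw [Finset.sum_comm]
  simp

lemma pushf_snd_apply (P : α × β → ℝ) (b : β) : pushf P Prod.snd b = ∑ a, P (a, b) := by
  simp [pushf, Fintype.sum_prod_type]

lemma MIof_fst_snd_eq_sum (P : α × β → ℝ) :
    MIof P Prod.fst Prod.snd =
      ∑ a, ∑ b, P (a, b) * log (P (a, b) / (pushf P Prod.fst a * pushf P Prod.snd b)) := by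
  simp [MIof, KL, pushf, Fintype.sum_prod_type]

lemma sum_mul_log_div_pushf_fst_mul (P : α × β → ℝ) (hP : ∀ ω, 0 ≤ P ω) (R : β → ℝ)
    (hR : ∀ b, R b ≠ 0) :
    ∑ a, ∑ b, P (a, b) * log (P (a, b) / (pushf P Prod.fst a * R b)) =
      MIof P Prod.fst Prod.snd + KL (pushf P Prod.snd) R := by
  have hterm : ∀ a b, P (a, b) * log (P (a, b) / (pushf P Prod.fst a * R b)) =
      P (a, b) * log (P (a, b) / (pushf P Prod.fst a * pushf P Prod.snd b)) +
        P (a, b) * log (pushf P Prod.snd b / R b) := by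
    intro a b
    rcases (hP (a, b)).eq_or_lt with h0 | hpos
    · simp [← h0]
    have hA : 0 < pushf P Prod.fst a := by
      rw [pushf_fst_apply]
      exact hpos.trans_le (Finset.single_le_sum (fun b' _ => hP (a, b')) (Finset.mem_univ b))
    have hB : 0 < pushf P Prod.snd b := by
      rw [pushf_snd_apply]
      exact hpos.trans_le (Finset.single_le_sum (fun a' _ => hP (a', b)) (Finset.mem_univ a))
    rw [← mul_add, log_div hpos.ne' (mul_ne_zero hA.ne' (hR b)), log_mul hA.ne' (hR b),
      log_div hpos.ne' (mul_ne_zero hA.ne' hB.ne'), log_mul hA.ne' hB.ne',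
      log_div hB.ne' (hR b)]
    ring
  simp only [hterm, Finset.sum_add_distrib, MIof_fst_snd_eq_sum, KL]
  rw [Finset.sum_comm (f := fun a b => P (a, b) * log (pushf P Prod.snd b / R b))]
  simp only [← Finset.sum_mul, pushf_snd_apply]

lemma mul_log_div_mul_le {p q r m : ℝ} (hp : 0 ≤ p) (hpq : p ≤ q) (hm : 0 < m) (hmr : m ≤ r) :
    p * log (p / (q * r)) ≤ p * log m⁻¹ := by
  rcases hp.eq_or_lt with rfl | hp
  · simp
  have hq : 0 < q := hp.trans_le hpq
  have hr : 0 < r := hm.trans_le hmr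
  refine mul_le_mul_of_nonneg_left (log_le_log (by positivity) ?_) hp.le
  calc p / (q * r) ≤ q / (q * r) := by gcongr
    _ = r⁻¹ := by field_simp
    _ ≤ m⁻¹ := by gcongr

lemma sum_row_mul_log_le (P : α × β → ℝ) (hP : ∀ ω, 0 ≤ P ω) (a : α) {m : ℝ} (hm : 0 < m)
    (hmB : ∀ b, m ≤ pushf P Prod.snd b) :
    ∑ b, P (a, b) * log (P (a, b) / (pushf P Prod.fst a * pushf P Prod.snd b)) ≤
      pushf P Prod.fst a * log m⁻¹ := by
  calc _ ≤ ∑ b, P (a, b) * log m⁻¹ := by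
        refine Finset.sum_le_sum fun b _ => mul_log_div_mul_le (hP _) ?_ hm (hmB b)
        rw [pushf_fst_apply]
        exact Finset.single_le_sum (fun b' _ => hP (a, b')) (Finset.mem_univ b)
    _ = pushf P Prod.fst a * log m⁻¹ := by rw [← Finset.sum_mul, pushf_fst_apply]

lemma div_mul_log_div_div_mul {p q r s : ℝ} (hs : s ≠ 0) :
    p / s * log (p / s / (q / s * r)) = 1 / s * (p * log (p / (q * r))) := by
  rw [div_mul_eq_mul_div q, div_div_div_cancel_right₀ hs]
  ring

end JointLaws

section ExtraSymbol

variable {V Y : Type} [Fintype V] [Fintype Y]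

noncomputable def extraSymbol (Q : V × Y → ℝ) (PY : Y → ℝ) (θ : ℝ) : Option V × Y → ℝ
  | (some v, y) => Q (v, y) / (1 + θ)
  | (none, y) => ((1 + θ) * PY y - pushf Q Prod.snd y) / (1 + θ)

variable {Q : V × Y → ℝ} {PY : Y → ℝ} {θ : ℝ}

lemma pushf_extraSymbol_snd (hθ : 1 + θ ≠ 0) (y : Y) :
    pushf (extraSymbol Q PY θ) Prod.snd y = PY y := by
  rw [pushf_snd_apply, Fintype.sum_option]
  simp only [extraSymbol, ← Finset.sum_div, ← pushf_snd_apply]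
  field_simp
  ring

lemma pushf_extraSymbol_fst_some (v : V) :
    pushf (extraSymbol Q PY θ) Prod.fst (some v) = pushf Q Prod.fst v / (1 + θ) := by
  simp only [pushf_fst_apply, extraSymbol, Finset.sum_div]

lemma pushf_extraSymbol_fst_none (hQ : ∑ ω, Q ω = 1) (hPY : ∑ y, PY y = 1) :
    pushf (extraSymbol Q PY θ) Prod.fst none = θ / (1 + θ) := by
  simp only [pushf_fst_apply, extraSymbol]
  rw [← Finset.sum_div, Finset.sum_sub_distrib, ← Finset.mul_sum, hPY, sum_pushf, hQ]
  ring

lemma isPMF_extraSymbol (hQ : IsPMF Q) (hPY : IsPMF PY) (hθ : 0 ≤ θ)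
    (hQY : ∀ y, pushf Q Prod.snd y ≤ (1 + θ) * PY y) : IsPMF (extraSymbol Q PY θ) := by
  refine ⟨?_, ?_⟩
  · rintro ⟨_ | v, y⟩
    · exact div_nonneg (sub_nonneg.mpr (hQY y)) (by linarith)
    · exact div_nonneg (hQ.1 _) (by linarith)
  · rw [← sum_pushf _ Prod.snd]
    simp only [pushf_extraSymbol_snd (by linarith : 1 + θ ≠ 0), hPY.2]

lemma MIof_extraSymbol_le (hQ : IsPMF Q) (hPY : IsPMF PY) (hθ : 0 ≤ θ)
    (hQY : ∀ y, pushf Q Prod.snd y ≤ (1 + θ) * PY y) {m : ℝ} (hm : 0 < m)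
    (hmPY : ∀ y, m ≤ PY y) :
    MIof (extraSymbol Q PY θ) Prod.fst Prod.snd ≤
      1 / (1 + θ) * (MIof Q Prod.fst Prod.snd + KL (pushf Q Prod.snd) PY) +
        θ / (1 + θ) * log m⁻¹ := by
  have hθ' : 1 + θ ≠ 0 := by linarith
  have hP' := isPMF_extraSymbol hQ hPY hθ hQY
  have hsome : ∑ v, ∑ y, extraSymbol Q PY θ (some v, y) *
      log (extraSymbol Q PY θ (some v, y) / (pushf (extraSymbol Q PY θ) Prod.fst (some v) *
        pushf (extraSymbol Q PY θ) Prod.snd y)) =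
      1 / (1 + θ) * (MIof Q Prod.fst Prod.snd + KL (pushf Q Prod.snd) PY) := by
    simp only [pushf_extraSymbol_fst_some, pushf_extraSymbol_snd hθ', extraSymbol,
      div_mul_log_div_div_mul hθ', ← Finset.mul_sum]
    rw [sum_mul_log_div_pushf_fst_mul Q hQ.1 PY fun y => (hm.trans_le (hmPY y)).ne']
  have hnone := sum_row_mul_log_le (extraSymbol Q PY θ) hP'.1 none hm
    fun y => by rw [pushf_extraSymbol_snd hθ']; exact hmPY y
  rw [MIof_fst_snd_eq_sum, Fintype.sum_option, hsome]
  rw [pushf_extraSymbol_fst_none hQ.2 hPY.2] at hnone ⊢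
  linarith

end ExtraSymbol

theorem extra_symbol_construction_general
    (V Y : Type) [Fintype V] [Fintype Y]
    (Q : V × Y → ℝ) (hQ : IsPMF Q)
    (PY : Y → ℝ) (hPY : IsPMF PY) (hPYpos : ∀ y, 0 < PY y)
    (μ : ℝ) (hμ : IsLeast (Set.range PY) μ⁻¹)
    (θ : ℝ) (hθ : 0 < θ)
    (hclose : ∀ y, |pushf Q Prod.snd y - PY y| ≤ θ * PY y)
    (P' : Option V × Y → ℝ)
    (hP'some : ∀ (v : V) (y : Y), P' (some v, y) = Q (v, y) / (1 + θ))
    (hP'none : ∀ y : Y,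
      P' (none, y) = ((1 + θ) * PY y - pushf Q Prod.snd y) / (1 + θ)) :
    IsPMF P' ∧
    (∀ y, pushf P' Prod.snd y = PY y) ∧
    MIof P' Prod.fst Prod.snd
      ≤ (1 / (1 + θ)) * (MIof Q Prod.fst Prod.snd + KL (pushf Q Prod.snd) PY)
        + (θ / (1 + θ)) * Real.log μ := by
  have hP' : P' = extraSymbol Q PY θ := funext fun
    | (some v, y) => hP'some v y
    | (none, y) => hP'none y
  subst hP'
  have hQY : ∀ y, pushf Q Prod.snd y ≤ (1 + θ) * PY y := fun y => by
    linarith [(abs_le.mp (hclose y)).2]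
  obtain ⟨⟨y₀, hy₀⟩, hμ_le⟩ := hμ
  have hμ_pos : 0 < μ⁻¹ := hy₀ ▸ hPYpos y₀
  refine ⟨isPMF_extraSymbol hQ hPY hθ.le hQY, pushf_extraSymbol_snd (by linarith), ?_⟩
  simpa only [inv_inv] using
    MIof_extraSymbol_le hQ hPY hθ.le hQY hμ_pos fun y => hμ_le ⟨y, rfl⟩

/-- **Adding an extra symbol to fix the `Y`-marginal (Lemma 6, part 1).**
Define `P'` on `(V ∪ {v*}) × Y` (with `v* = none`) by `P'(v,y) = Q(v,y)/(1+θ)`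
and `P'(v*,y) = ((1+θ)P_Y(y) − Q_Y(y))/(1+θ)`. Then `P'` is a pmf whose
`Y`-marginal is `P_Y`, and
`I_{P'}(Ṽ;Y) ≤ (1/(1+θ))·(I_Q(V;Y) + D(Q_Y‖P_Y)) + (θ/(1+θ))·log μ`. -/
theorem extra_symbol_construction
    (V Y : Type) [Fintype V] [Fintype Y] [Nonempty V] [Nonempty Y]
    (Q : V × Y → ℝ) (hQ : IsPMF Q)
    (PY : Y → ℝ) (hPY : IsPMF PY) (hPYpos : ∀ y, 0 < PY y)
    (μ : ℝ) (hμ : IsLeast (Set.range PY) μ⁻¹)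
    (θ : ℝ) (hθ : 0 < θ)
    (hclose : ∀ y, |pushf Q Prod.snd y - PY y| ≤ θ * PY y)
    (P' : Option V × Y → ℝ)
    (hP'some : ∀ (v : V) (y : Y), P' (some v, y) = Q (v, y) / (1 + θ))
    (hP'none : ∀ y : Y,
      P' (none, y) = ((1 + θ) * PY y - pushf Q Prod.snd y) / (1 + θ)) :
    IsPMF P' ∧
    (∀ y, pushf P' Prod.snd y = PY y) ∧
    MIof P' Prod.fst Prod.snd
      ≤ (1 / (1 + θ)) * (MIof Q Prod.fst Prod.snd + KL (pushf Q Prod.snd) PY)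
        + (θ / (1 + θ)) * Real.log μ :=
  extra_symbol_construction_general V Y Q hQ PY hPY hPYpos μ hμ θ hθ hclose P' hP'some hP'none
end
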